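/- arXiv:2203.09106 — 8 statements merged into one kernel-verified Lean document; each statement's English description precedes it below -/
import Mathlib

section
/- If G is a connected graph with girth at least 4, then the size of a minimum total dominating set of G equals the cd-chromatic number χ_cd(G). -/
variable {V : Type*}

/-- A cd-coloring of a connected graph with `q` colors: a proper coloring in which every
nonempty color class is contained in the open neighbourhood of some vertex. -/
def IsCDColoring (G : SimpleGraph V) {q : ℕ} (c : V → Fin q) : Prop :=
  (∀ a b, G.Adj a b → c a ≠ c b) ∧
    ∀ i : Fin q, (∃ v, c v = i) → ∃ y, ∀ v, c v = i → G.Adj y v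

/-- The cd-chromatic number: the least number of colors in a cd-coloring. -/
noncomputable def cdChromaticNumber (G : SimpleGraph V) : ℕ :=
  sInf {q | ∃ c : V → Fin q, IsCDColoring G c}

/-- A total dominating set: every vertex has a neighbour in the set. -/
def IsTotalDominatingSet (G : SimpleGraph V) (S : Finset V) : Prop :=
  ∀ v : V, ∃ u ∈ S, G.Adj u v

/-- The minimum size of a total dominating set. -/
noncomputable def totalDominationNumber (G : SimpleGraph V) : ℕ :=
  sInf {k | ∃ S : Finset V, S.card ≤ k ∧ IsTotalDominatingSet G S}

open SimpleGraph

lemma trifree (G : SimpleGraph V) (hgirth : 4 ≤ G.egirth)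
    {a b c : V} (hab : G.Adj a b) (hbc : G.Adj b c) (hca : G.Adj c a) : False := by
  have hcyc : (Walk.cons hab (Walk.cons hbc (Walk.cons hca Walk.nil))).IsCycle := by
    have h1 := hab.ne
    have h2 := hbc.ne
    have h3 := hca.ne
    have h4 := hca.ne'
    have h5 := hab.ne'
    simp only [Walk.isCycle_def, Walk.isTrail_def, Walk.edges_cons, Walk.edges_nil,
      Walk.support_cons, Walk.support_nil]
    refine ⟨?_, ?_, ?_⟩ <;> simp [Sym2.eq_iff] <;> aesop
  have h := le_egirth.mp hgirth a _ hcyc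
  simp only [Walk.length_cons, Walk.length_nil] at h
  norm_num at h

/-- From a cd-coloring, extract a total dominating set of at most `q` vertices. -/
lemma tds_of_coloring [Fintype V] [Nonempty V] (G : SimpleGraph V) {q : ℕ}
    (c : V → Fin q) (hc : IsCDColoring G c) :
    ∃ S : Finset V, S.card ≤ q ∧ IsTotalDominatingSet G S := by
  classical
  let y : Fin q → V := fun i =>
    if h : ∃ v, c v = i then Classical.choose (hc.2 i h) else Classical.arbitrary V
  refine ⟨Finset.image y Finset.univ, ?_, ?_⟩
  · exact (Finset.card_image_le).trans (by simp)
  · intro v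
    have hex : ∃ w, c w = c v := ⟨v, rfl⟩
    refine ⟨y (c v), Finset.mem_image_of_mem y (Finset.mem_univ _), ?_⟩
    have : y (c v) = Classical.choose (hc.2 (c v) hex) := by
      simp only [y, dif_pos hex]
    rw [this]
    exact Classical.choose_spec (hc.2 (c v) hex) v rfl

/-- From a total dominating set of size ≤ k in a triangle-free graph, build a cd-coloring. -/
lemma coloring_of_tds [Fintype V] (G : SimpleGraph V) (hgirth : 4 ≤ G.egirth)
    {k : ℕ} (S : Finset V) (hk : S.card ≤ k) (hS : IsTotalDominatingSet G S) :
    ∃ c : V → Fin k, IsCDColoring G c := by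
  classical
  let f : V → V := fun v => Classical.choose (hS v)
  have hfS : ∀ v, f v ∈ S := fun v => (Classical.choose_spec (hS v)).1
  have hfadj : ∀ v, G.Adj (f v) v := fun v => (Classical.choose_spec (hS v)).2
  let e := S.equivFin
  let c : V → Fin k := fun v => Fin.castLE hk (e ⟨f v, hfS v⟩)
  have hinj : ∀ a b, c a = c b → f a = f b := by
    intro a b hab
    have := Fin.castLE_injective hk hab
    have := e.injective this
    exact Subtype.ext_iff.mp this
  refine ⟨c, ?_, ?_⟩
  · intro a b hadj hcc
    have hfa : f a = f b := hinj a b hcc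
    exact trifree G hgirth (hfadj a) hadj (hfa ▸ (hfadj b).symm)
  · rintro i ⟨v, hv⟩
    refine ⟨f v, fun w hw => ?_⟩
    have : f w = f v := hinj w v (hw.trans hv.symm)
    exact this ▸ hfadj w

/-- In a connected graph of girth at least 4, the total domination number equals the
cd-chromatic number. -/
theorem stmt2 [Fintype V] (G : SimpleGraph V) (hconn : G.Connected)
    (hgirth : 4 ≤ G.egirth) :
    totalDominationNumber G = cdChromaticNumber G := by
  classical
  have hne : Nonempty V := hconn.nonempty
  by_cases hiso : ∀ v : V, ∃ u, G.Adj u v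
  · -- every vertex has a neighbour
    set A := {k | ∃ S : Finset V, S.card ≤ k ∧ IsTotalDominatingSet G S} with hA
    set B := {q | ∃ c : V → Fin q, IsCDColoring G c} with hBdef
    have hAne : (Finset.univ : Finset V).card ∈ A := by
      refine ⟨Finset.univ, le_rfl, fun v => ?_⟩
      obtain ⟨u, hu⟩ := hiso v
      exact ⟨u, Finset.mem_univ u, hu⟩
    have hAmem : sInf A ∈ A := Nat.sInf_mem ⟨_, hAne⟩
    obtain ⟨S, hScard, hStd⟩ := hAmem
    obtain ⟨c, hc⟩ := coloring_of_tds G hgirth S hScard hStd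
    have hBmem : sInf A ∈ B := ⟨c, hc⟩
    have h1 : sInf B ≤ sInf A := Nat.sInf_le hBmem
    have hBinf : sInf B ∈ B := Nat.sInf_mem ⟨_, hBmem⟩
    obtain ⟨c', hc'⟩ := hBinf
    obtain ⟨T, hTcard, hTtd⟩ := tds_of_coloring G c' hc'
    have h2 : sInf A ≤ sInf B := Nat.sInf_le ⟨T, hTcard, hTtd⟩
    exact le_antisymm h2 h1
  · push_neg at hiso
    obtain ⟨v, hv⟩ := hiso
    have hA : {k | ∃ S : Finset V, S.card ≤ k ∧ IsTotalDominatingSet G S} = ∅ := by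
      ext k
      simp only [Set.mem_setOf_eq, Set.mem_empty_iff_false, iff_false]
      rintro ⟨S, -, hS⟩
      obtain ⟨u, -, hu⟩ := hS v
      exact hv u hu
    have hB : {q | ∃ c : V → Fin q, IsCDColoring G c} = ∅ := by
      ext q
      simp only [Set.mem_setOf_eq, Set.mem_empty_iff_false, iff_false]
      rintro ⟨c, hc⟩
      obtain ⟨y, hy⟩ := hc.2 (c v) ⟨v, rfl⟩
      exact hv y (hy v rfl)
    rw [totalDominationNumber, cdChromaticNumber, hA, hB]
end

section
/- In a graph G with girth at least 5, if a vertex u has degree at least k+1, then every total dominating set of G of size at most k contains u. -/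
variable {V : Type*}

/-- In a graph of girth at least 5, a vertex of degree at least `k + 1` belongs to every
total dominating set of size at most `k`. -/
theorem stmt4 [Fintype V] (G : SimpleGraph V) [DecidableRel G.Adj]
    (hgirth : 5 ≤ G.egirth) (k : ℕ) (u : V) (hdeg : k + 1 ≤ G.degree u)
    (S : Finset V) (hS : IsTotalDominatingSet G S) (hcard : S.card ≤ k) :
    u ∈ S := by
  by_contra hu
  choose f hfS hfadj using hS
  have hcard' : S.card < (G.neighborFinset u).card := by
    rw [SimpleGraph.card_neighborFinset_eq_degree]
    omega
  obtain ⟨v₁, hv₁, v₂, hv₂, hne, heq⟩ :=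
    Finset.exists_ne_map_eq_of_card_lt_of_maps_to hcard' (fun v _ => hfS v)
  have hav₁ : G.Adj (f v₁) v₁ := hfadj v₁
  have hav₂ : G.Adj (f v₁) v₂ := heq ▸ hfadj v₂
  have huv₁ : G.Adj u v₁ := by simpa using hv₁
  have huv₂ : G.Adj u v₂ := by simpa using hv₂
  have hsu : f v₁ ≠ u := fun h => hu (h ▸ hfS v₁)
  let w : G.Walk u u :=
    SimpleGraph.Walk.cons huv₁ (SimpleGraph.Walk.cons hav₁.symm
      (SimpleGraph.Walk.cons hav₂ (SimpleGraph.Walk.cons huv₂.symm SimpleGraph.Walk.nil)))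
  have hwc : w.IsCycle := by
    have h1 := huv₁.ne
    have h2 := huv₂.ne
    have h3 := hav₁.ne
    have h4 := hav₂.ne
    have h1' := h1 ∘ Eq.symm
    have h2' := h2 ∘ Eq.symm
    have h3' := h3 ∘ Eq.symm
    have h4' := h4 ∘ Eq.symm
    have hsu' := hsu ∘ Eq.symm
    have hne' := hne ∘ Eq.symm
    constructor
    · constructor
      · simp only [w, SimpleGraph.Walk.isTrail_def, SimpleGraph.Walk.edges_cons,
          SimpleGraph.Walk.edges_nil, List.nodup_cons, List.mem_cons, List.not_mem_nil,
          List.nodup_nil, and_true, or_false, not_or, Sym2.eq_iff]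
        tauto
      · simp [w]
    · simp only [w, SimpleGraph.Walk.support_cons, SimpleGraph.Walk.support_nil,
        List.tail_cons, List.nodup_cons, List.mem_cons, List.not_mem_nil, List.mem_singleton,
        List.nodup_nil, and_true, or_false, not_or]
      tauto
  have hle := SimpleGraph.le_egirth.mp hgirth u w hwc
  have h4 : w.length = 4 := by simp [w]
  rw [h4] at hle
  exact absurd hle (by norm_num)
end

section
/- Let G be a graph with girth at least 5 that has a total dominating set of size at most k. Let H be the set of vertices of degree at least k+1, let J be the vertices outside H with a neighbor in H, and let R be the remaining vertices. Then |H| ≤ k, there is no edge between H and R, and |R| ≤ k², so that |J ∩ N(R)| ≤ k³. -/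
variable {V : Type*}

lemma no_common_pair (G : SimpleGraph V) (hg : 5 ≤ G.egirth)
    {u s w w' : V} (hus : u ≠ s) (hww : w ≠ w')
    (h1 : G.Adj u w) (h2 : G.Adj s w) (h3 : G.Adj s w') (h4 : G.Adj u w') : False := by
  let c : G.Walk u u := .cons h1 (.cons h2.symm (.cons h3 (.cons h4.symm .nil)))
  have hcyc : c.IsCycle := by
    have := h1.ne; have := h2.ne; have := h3.ne; have := h4.ne
    simp_all [c, SimpleGraph.Walk.isCycle_def, SimpleGraph.Walk.isTrail_def,
      Sym2.eq_iff, eq_comm, Ne.symm]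
  have := SimpleGraph.le_egirth.mp hg u c hcyc
  simp only [c, SimpleGraph.Walk.length_cons, SimpleGraph.Walk.length_nil] at this
  norm_num at this

/-- Structure of a graph of girth at least 5 having a total dominating set of size at
most `k`: with `H` the high-degree vertices, `J` their other neighbours and `R` the rest,
we have `|H| ≤ k`, there is no edge between `H` and `R`, `|R| ≤ k²` and
`|J ∩ N(R)| ≤ k³`. -/
theorem stmt5 [Fintype V] (G : SimpleGraph V) [DecidableRel G.Adj]
    (hgirth : 5 ≤ G.egirth) (k : ℕ)
    (htds : ∃ S : Finset V, S.card ≤ k ∧ IsTotalDominatingSet G S)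
    (H J R : Set V)
    (hH : H = {u : V | k + 1 ≤ G.degree u})
    (hJ : J = {v : V | v ∉ H ∧ ∃ u ∈ H, G.Adj u v})
    (hR : R = {v : V | v ∉ H ∧ v ∉ J}) :
    H.ncard ≤ k ∧
      (∀ u ∈ H, ∀ v ∈ R, ¬ G.Adj u v) ∧
      R.ncard ≤ k ^ 2 ∧
      (J ∩ {v : V | ∃ r ∈ R, G.Adj v r}).ncard ≤ k ^ 3 := by
  classical
  obtain ⟨S, hSk, hdom⟩ := htds
  choose f hfS hfadj using hdom
  -- degrees outside H are ≤ k
  have hdegle : ∀ v : V, v ∉ H → G.degree v ≤ k := by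
    intro v hv
    rw [hH] at hv
    simp only [Set.mem_setOf_eq, not_le] at hv
    omega
  -- Step 1 : H ⊆ S
  have hHS : H ⊆ ↑S := by
    intro u hu
    rw [hH] at hu
    by_contra huS
    have hinj : Set.InjOn f (G.neighborFinset u : Set V) := by
      intro w hw w' hw' hfe
      by_contra hne
      have hsu : u ≠ f w := fun h => huS (h ▸ hfS w)
      exact no_common_pair G hgirth hsu hne
        (by simpa using hw) (hfadj w) (hfe ▸ hfadj w') (by simpa using hw')
    have hcard : (G.neighborFinset u).card ≤ S.card :=
      Finset.card_le_card_of_injOn f (fun w _ => hfS w) hinj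
    have hdeg : k + 1 ≤ G.degree u := hu
    rw [SimpleGraph.degree] at hdeg
    omega
  have h1 : H.ncard ≤ k := by
    calc H.ncard ≤ (↑S : Set V).ncard := Set.ncard_le_ncard hHS (Set.toFinite _)
    _ = S.card := Set.ncard_coe_finset S
    _ ≤ k := hSk
  -- Step 2 : no edges between H and R
  have h2 : ∀ u ∈ H, ∀ v ∈ R, ¬ G.Adj u v := by
    intro u hu v hv hadj
    rw [hR] at hv
    exact hv.2 (by rw [hJ]; exact ⟨hv.1, u, hu, hadj⟩)
  -- Step 3 : |R| ≤ k²
  have h3 : R.ncard ≤ k ^ 2 := by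
    set Sf : Finset V := S.filter (fun s => s ∉ H) with hSf
    have hsub : R ⊆ ((Sf.biUnion (fun s => G.neighborFinset s) : Finset V) : Set V) := by
      intro v hv
      have hvR := hv
      rw [hR] at hv
      have hsH : f v ∉ H := fun h => h2 (f v) h v hvR (hfadj v)
      simp only [Finset.coe_biUnion, Set.mem_iUnion]
      exact ⟨f v, by simp [hSf, hfS v, hsH], by simpa using hfadj v⟩
    calc R.ncard ≤ (((Sf.biUnion (fun s => G.neighborFinset s) : Finset V) : Set V) : Set V).ncard :=
          Set.ncard_le_ncard hsub (Set.toFinite _)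
      _ = (Sf.biUnion (fun s => G.neighborFinset s)).card := Set.ncard_coe_finset _
      _ ≤ ∑ s ∈ Sf, (G.neighborFinset s).card := Finset.card_biUnion_le
      _ ≤ Sf.card * k := by
          rw [← smul_eq_mul]
          exact Finset.sum_le_card_nsmul _ _ k
            (fun s hs => hdegle s (Finset.mem_filter.mp hs).2)
      _ ≤ k * k := by
          have : Sf.card ≤ S.card := Finset.card_filter_le _ _
          exact Nat.mul_le_mul_right k (le_trans this hSk)
      _ = k ^ 2 := (sq k).symm
  refine ⟨h1, h2, h3, ?_⟩
  -- Step 4 : |J ∩ N(R)| ≤ k³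
  set Rf : Finset V := Finset.univ.filter (fun v => v ∈ R) with hRf
  have hRfR : (↑Rf : Set V) = R := by ext v; simp [hRf]
  have hsub : (J ∩ {v : V | ∃ r ∈ R, G.Adj v r}) ⊆ ((Rf.biUnion (fun s => G.neighborFinset s) : Finset V) : Set V) := by
    intro v hv
    obtain ⟨r, hrR, hadj⟩ := hv.2
    simp only [Finset.coe_biUnion, Set.mem_iUnion]
    exact ⟨r, by simp [hRf, hrR], by simp [hadj.symm]⟩
  calc (J ∩ {v : V | ∃ r ∈ R, G.Adj v r}).ncard
      ≤ (((Rf.biUnion (fun s => G.neighborFinset s) : Finset V) : Set V) : Set V).ncard :=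
        Set.ncard_le_ncard hsub (Set.toFinite _)
    _ = (Rf.biUnion (fun s => G.neighborFinset s)).card := Set.ncard_coe_finset _
    _ ≤ ∑ r ∈ Rf, (G.neighborFinset r).card := Finset.card_biUnion_le
    _ ≤ Rf.card * k := by
        rw [← smul_eq_mul]
        refine Finset.sum_le_card_nsmul _ _ k (fun r hr => ?_)
        have hrR : r ∈ R := by rw [← hRfR]; exact_mod_cast hr
        have : r ∉ H := by rw [hR] at hrR; exact hrR.1
        exact hdegle r this
    _ ≤ k ^ 2 * k := by
        have : Rf.card = R.ncard := by rw [← hRfR, Set.ncard_coe_finset]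
        exact Nat.mul_le_mul_right k (this ▸ h3)
    _ = k ^ 3 := by ring
end

section
/- Let G be a graph and v a vertex of G. Let G' be the graph obtained from G by deleting v and adding, for each pair v_i, v_j of neighbors of v, a new vertex v_{ij} adjacent exactly to v_i and v_j. Then G has an odd cycle transversal of size at most k not containing v if and only if G' has an odd cycle transversal of size at most k. -/
variable {V : Type*}

/-- `O` is an odd cycle transversal of `G`: `G - O` is bipartite. -/
def IsOCT {W : Type*} (G : SimpleGraph W) (O : Set W) : Prop :=
  ∃ f : W → Bool, ∀ a b, G.Adj a b → a ∉ O → b ∉ O → f a ≠ f b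

/-- Vertices of the gadget graph `G'`: the vertices of `G` other than `v`, together with a new
vertex `v_{ij}` for each pair `{v_i, v_j}` of neighbours of `v`. -/
def GadgetVert (G : SimpleGraph V) (v : V) : Type _ :=
  {w : V // w ≠ v} ⊕ {p : Sym2 V // ¬ p.IsDiag ∧ ∀ x ∈ p, G.Adj v x}

/-- The gadget graph `G'` obtained from `G` by deleting `v` and adding, for each pair
`v_i, v_j` of neighbours of `v`, a new vertex adjacent exactly to `v_i` and `v_j`. -/
def gadget (G : SimpleGraph V) (v : V) : SimpleGraph (GadgetVert G v) where
  Adj a b :=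
    match a, b with
    | Sum.inl w, Sum.inl w' => G.Adj w.1 w'.1
    | Sum.inl w, Sum.inr p => w.1 ∈ p.1
    | Sum.inr p, Sum.inl w => w.1 ∈ p.1
    | Sum.inr _, Sum.inr _ => False
  symm := by
    constructor
    rintro (w | p) (w' | p') h
    · exact h.symm
    · exact h
    · exact h
    · exact h
  loopless := by
    constructor
    rintro (w | p) h
    · exact G.irrefl h
    · exact h

theorem IsOCT.mono {W : Type*} {G : SimpleGraph W} {O O₂ : Set W} (h : IsOCT G O)
    (hO : O ⊆ O₂) : IsOCT G O₂ :=
  let ⟨f, hf⟩ := h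
  ⟨f, fun a b hab ha hb => hf a b hab (fun h => ha (hO h)) (fun h => hb (hO h))⟩

/-- Each new vertex `v_{ij}` takes the colour of `v`, which differs from that of `v_i`, `v_j`
since `v ∉ O`. -/
theorem IsOCT.to_gadget {G : SimpleGraph V} {v : V} {O : Set V} (h : IsOCT G O) (hv : v ∉ O) :
    IsOCT (gadget G v) (Sum.inl '' (Subtype.val ⁻¹' O) : Set (GadgetVert G v)) := by
  obtain ⟨f, hf⟩ := h
  refine ⟨Sum.elim (fun w => f w) (fun _ => f v), ?_⟩
  have hinl {w : {w : V // w ≠ v}}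
      (hw : (Sum.inl w : GadgetVert G v) ∉ Sum.inl '' (Subtype.val ⁻¹' O)) : w.1 ∉ O :=
    fun h => hw ⟨w, h, rfl⟩
  rintro (w | p) (w' | p') hadj ha hb
  · exact hf _ _ hadj (hinl ha) (hinl hb)
  · exact (hf _ _ (p'.2.2 _ hadj) hv (hinl ha)).symm
  · exact hf _ _ (p.2.2 _ hadj) hv (hinl hb)
  · exact hadj.elim

theorem isOCT_of_neighbors_monochromatic {G : SimpleGraph V} {O : Set V} {v : V}
    (f : {w // w ≠ v} → Bool)
    (hf : ∀ a b : {w // w ≠ v}, G.Adj a b → a.1 ∉ O → b.1 ∉ O → f a ≠ f b)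
    (hnbr : ∀ x y (hx : G.Adj v x) (hy : G.Adj v y), x ∉ O → y ∉ O →
      f ⟨x, hx.ne'⟩ = f ⟨y, hy.ne'⟩) :
    IsOCT G O := by
  classical
  obtain ⟨c, hc⟩ : ∃ c, ∀ x (hx : G.Adj v x), x ∉ O → f ⟨x, hx.ne'⟩ ≠ c := by
    by_cases h : ∃ x, ∃ hx : G.Adj v x, x ∉ O
    · obtain ⟨x, hx, hxO⟩ := h
      exact ⟨!f ⟨x, hx.ne'⟩, fun y hy hyO => by simp [hnbr y x hy hx hyO hxO]⟩
    · push Not at h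
      exact ⟨true, fun x hx hxO => (hxO (h x hx)).elim⟩
  refine ⟨fun w => if hw : w = v then c else f ⟨w, hw⟩, fun a b hab ha hb => ?_⟩
  by_cases hav : a = v <;> by_cases hbv : b = v
  · exact absurd (hav.trans hbv.symm) hab.ne
  · subst hav
    simpa [hbv] using (hc b hab hb).symm
  · subst hbv
    simpa [hav] using hc a hab.symm ha
  · simpa [hav, hbv] using hf ⟨a, hav⟩ ⟨b, hbv⟩ hab ha hb

namespace GadgetVert

variable {G : SimpleGraph V} {v : V}

/-- The vertex of `G` a gadget vertex stands for; a new vertex `v_{ij}` is sent to one of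
`v_i`, `v_j`, chosen arbitrarily. -/
noncomputable def proj : GadgetVert G v → V :=
  Sum.elim (fun w => w.1) (fun p => p.1.out.1)

theorem proj_ne (a : GadgetVert G v) : proj a ≠ v := by
  rcases a with w | p
  · exact w.2
  · exact (p.2.2 _ (Sym2.out_fst_mem p.1)).ne'

theorem proj_inr_mem (p : {p : Sym2 V // ¬ p.IsDiag ∧ ∀ x ∈ p, G.Adj v x}) :
    proj (Sum.inr p : GadgetVert G v) ∈ p.1 :=
  Sym2.out_fst_mem p.1

end GadgetVert

open GadgetVert in
/-- Two neighbours `x ≠ y` of `v` surviving `proj '' O'` are both adjacent to the surviving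
vertex `v_{xy}`, so they get the same colour. -/
theorem IsOCT.of_gadget {G : SimpleGraph V} {v : V} {O' : Set (GadgetVert G v)}
    (h : IsOCT (gadget G v) O') : IsOCT G (proj '' O') := by
  obtain ⟨f, hf⟩ := h
  have hinl {w : {w : V // w ≠ v}} (hw : w.1 ∉ proj '' O') : Sum.inl w ∉ O' :=
    fun h => hw ⟨_, h, rfl⟩
  refine isOCT_of_neighbors_monochromatic (f ∘ Sum.inl)
    (fun a b hab ha hb => hf _ _ hab (hinl ha) (hinl hb)) ?_
  intro x y hx hy hxO hyO
  by_cases hxy : x = y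
  · subst hxy
    rfl
  let p : {p : Sym2 V // ¬ p.IsDiag ∧ ∀ z ∈ p, G.Adj v z} :=
    ⟨s(x, y), by simpa using hxy,
      fun z hz => by rcases Sym2.mem_iff.mp hz with rfl | rfl <;> assumption⟩
  have hp : Sum.inr p ∉ O' := by
    intro hpO
    rcases Sym2.mem_iff.mp (proj_inr_mem p) with h | h
    · exact hxO (h ▸ ⟨_, hpO, rfl⟩)
    · exact hyO (h ▸ ⟨_, hpO, rfl⟩)
  have hxp := hf (Sum.inl ⟨x, hx.ne'⟩) (Sum.inr p) (Sym2.mem_mk_left x y) (hinl hxO) hp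
  have hyp := hf (Sum.inl ⟨y, hy.ne'⟩) (Sum.inr p) (Sym2.mem_mk_right x y) (hinl hyO) hp
  exact (Bool.eq_not_of_ne hxp).trans (Bool.eq_not_of_ne hyp).symm

theorem stmt11_general (G : SimpleGraph V) (v : V) (k : ℕ) :
    (∃ O : Finset V, O.card ≤ k ∧ v ∉ O ∧ IsOCT G ↑O) ↔
      (∃ O' : Finset (GadgetVert G v), O'.card ≤ k ∧ IsOCT (gadget G v) ↑O') := by
  classical
  constructor
  · rintro ⟨O, hk, hv, hO⟩
    refine ⟨(O.subtype (· ≠ v)).map (.inl : {w // w ≠ v} ↪ GadgetVert G v), ?_,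
      (hO.to_gadget hv).mono ?_⟩
    · calc _ = (O.subtype (· ≠ v)).card := Finset.card_map _
        _ ≤ O.card := (Finset.card_subtype _ O).trans_le (Finset.card_filter_le O _)
        _ ≤ k := hk
    · rintro _ ⟨w, hw, rfl⟩
      exact Finset.mem_map_of_mem _ (Finset.mem_subtype.2 hw)
  · rintro ⟨O', hk, hO'⟩
    refine ⟨O'.image GadgetVert.proj, Finset.card_image_le.trans hk, ?_, ?_⟩
    · simpa using fun a _ => GadgetVert.proj_ne a
    · simpa using hO'.of_gadget

/-- `G` has an odd cycle transversal of size at most `k` not containing `v` iff the gadget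
graph `G'` has an odd cycle transversal of size at most `k`. -/
theorem stmt11 [Fintype V] [DecidableEq V] (G : SimpleGraph V) (v : V) (k : ℕ) :
    (∃ O : Finset V, O.card ≤ k ∧ v ∉ O ∧ IsOCT G ↑O) ↔
      (∃ O' : Finset (GadgetVert G v), O'.card ≤ k ∧ IsOCT (gadget G v) ↑O') :=
  stmt11_general G v k
end

section
/- Let G be a graph, k ≥ 1, q ∈ {1,2}, and let G' be obtained from G by adding a new vertex v adjacent to every vertex of G, together with k+q+2 new pendant vertices v₁, ..., v_{k+q+2} each adjacent only to v. Then G has a set S of at most k vertices such that G − S is properly q-colorable if and only if G' has a set S' of at most k vertices such that G' − S' admits a cd-coloring with at most q+1 colors. -/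
variable {V : Type*}

/-- A proper coloring with at most `q` colors exists. -/
def ProperColorable {W : Type*} (G : SimpleGraph W) (q : ℕ) : Prop :=
  ∃ c : W → Fin q, ∀ a b, G.Adj a b → c a ≠ c b

/-- A cd-coloring with at most `q` colors exists: a proper coloring in which every nonempty
color class is contained in the closed neighbourhood of some vertex. -/
def CDColorable {W : Type*} (G : SimpleGraph W) (q : ℕ) : Prop :=
  ∃ c : W → Fin q, (∀ a b, G.Adj a b → c a ≠ c b) ∧
    ∀ i : Fin q, (∃ v, c v = i) → ∃ y, ∀ v, c v = i → G.Adj y v ∨ v = y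

/-- The graph `G'` obtained from `G` by adding a universal vertex `v` (the `Sum.inr (Sum.inl _)`
vertex) and `k + q + 2` pendant vertices adjacent only to `v`. -/
def apexPendant (G : SimpleGraph V) (k q : ℕ) :
    SimpleGraph (V ⊕ (Unit ⊕ Fin (k + q + 2))) where
  Adj a b :=
    match a, b with
    | Sum.inl a, Sum.inl b => G.Adj a b
    | Sum.inl _, Sum.inr (Sum.inl _) => True
    | Sum.inr (Sum.inl _), Sum.inl _ => True
    | Sum.inr (Sum.inl _), Sum.inr (Sum.inr _) => True
    | Sum.inr (Sum.inr _), Sum.inr (Sum.inl _) => True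
    | _, _ => False
  symm := by
    constructor
    rintro (a | (i | i)) (b | (j | j)) h
    all_goals first | exact h.symm | exact h | trivial
  loopless := by
    constructor
    rintro (a | (i | i)) h
    · exact G.irrefl h
    · exact h
    · exact h

/-!
Forward: delete the same vertices, keep the colors on `G`, give the apex a fresh color and the
pendants an old one; every color class then lies in the closed neighbourhood of the apex.
Backward: at most `k` deletions leave `q + 2` pendants. Were the apex deleted, they would be
isolated, and isolated vertices in a cd-coloring need pairwise distinct colors. So the apex
survives, and the surviving vertices of `G` see only the `q` colors other than its own.
-/

open Finset

section Coloring

variable {W U : Type*} {H : SimpleGraph W} {q : ℕ}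

theorem CDColorable.properColorable (h : CDColorable H q) : ProperColorable H q :=
  let ⟨c, hc, _⟩ := h
  ⟨c, hc⟩

theorem cdColorable_succ_of_forall_adj (y : W) (hy : ∀ w, w ≠ y → H.Adj y w) (c : W → Fin q)
    (hc : ∀ a b, a ≠ y → b ≠ y → H.Adj a b → c a ≠ c b) : CDColorable H (q + 1) := by
  classical
  refine ⟨fun w => if w = y then Fin.last q else (c w).castSucc, ?_, fun _ _ => ⟨y, ?_⟩⟩
  · intro a b hab
    by_cases ha : a = y <;> by_cases hb : b = y
    · exact absurd (ha.trans hb.symm) hab.ne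
    · simpa [ha, hb] using (Fin.castSucc_ne_last (c b)).symm
    · simp [ha, hb]
    · simpa [ha, hb] using hc a b ha hb hab
  · intro v _
    by_cases hv : v = y
    · exact Or.inr hv
    · exact Or.inl (hy v hv)

/-- Two distinct vertices without neighbours cannot share a class dominated by one vertex. -/
theorem CDColorable.card_le_of_isolated {ι : Type*} [Fintype ι] (h : CDColorable H q)
    (f : ι → W) (hf : Function.Injective f) (hiso : ∀ i w, ¬ H.Adj (f i) w) :
    Fintype.card ι ≤ q := by
  obtain ⟨c, -, hdom⟩ := h
  refine (Fintype.card_le_of_injective (c ∘ f) fun i j hij => hf ?_).trans_eq (Fintype.card_fin q)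
  obtain ⟨y, hy⟩ := hdom (c (f i)) ⟨f i, rfl⟩
  have eq_y : ∀ l, c (f l) = c (f i) → f l = y := fun l hl =>
    (hy (f l) hl).resolve_left fun hadj => hiso l y hadj.symm
  exact (eq_y i rfl).trans (eq_y j hij.symm).symm

/-- The colors on the image of `φ` avoid the color of `y`, so they fit into `q` colors
through `Fin.succAbove`. -/
theorem ProperColorable.of_hom_of_forall_adj {G₀ : SimpleGraph U} (φ : G₀ →g H) (y : W)
    (hy : ∀ u, H.Adj y (φ u)) (h : ProperColorable H (q + 1)) : ProperColorable G₀ q := by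
  obtain ⟨c, hc⟩ := h
  choose c' hc' using fun u => Fin.exists_succAbove_eq (hc y (φ u) (hy u)).symm
  refine ⟨c', fun a b hab heq => hc _ _ (φ.map_adj hab) ?_⟩
  rw [← hc' a, ← hc' b, heq]

end Coloring

namespace ApexPendant

variable {G : SimpleGraph V} {k q : ℕ} {S' : Finset (V ⊕ (Unit ⊕ Fin (k + q + 2)))}

local notation "apex" => (Sum.inr (Sum.inl ()) : V ⊕ (Unit ⊕ Fin (k + q + 2)))

theorem cdColorable_of_properColorable (hq : 1 ≤ q) {S : Finset V}
    (h : ProperColorable (G.induce {w : V | w ∉ S}) q) :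
    CDColorable ((apexPendant G k q).induce {w | w ∉ S.map .inl}) (q + 1) := by
  obtain ⟨c, hc⟩ := h
  refine cdColorable_succ_of_forall_adj ⟨apex, by simp⟩ ?_
    (fun | ⟨.inl a, ha⟩ => c ⟨a, by simpa using ha⟩ | _ => ⟨0, hq⟩) ?_
  · rintro ⟨a | ⟨⟩ | j, _⟩ h
    · trivial
    · exact absurd rfl h
    · trivial
  · rintro ⟨a | ⟨⟩ | i, _⟩ ⟨b | ⟨⟩ | j, _⟩ hay hby hab
    · exact hc _ _ hab
    all_goals first | exact absurd rfl hay | exact absurd rfl hby | exact hab.elim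

theorem not_adj_pendant_of_apex_mem (hapex : apex ∈ S') (j : Fin (k + q + 2))
    (hj : Sum.inr (Sum.inr j) ∈ {w | w ∉ S'}) (w : {w | w ∉ S'}) :
    ¬ ((apexPendant G k q).induce {w | w ∉ S'}).Adj ⟨Sum.inr (Sum.inr j), hj⟩ w := by
  rcases w with ⟨a | ⟨⟩ | i, hw⟩
  · exact id
  · exact absurd hapex hw
  · exact id

theorem apex_not_mem (hS' : S'.card ≤ k)
    (h : CDColorable ((apexPendant G k q).induce {w | w ∉ S'}) (q + 1)) : apex ∉ S' := by
  classical
  intro hapex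
  let survivors := S'.toRight.toRightᶜ
  have hsurvivors : q + 2 ≤ survivors.card := by
    have : S'.toRight.toRight.card ≤ k := card_toRight_le.trans (card_toRight_le.trans hS')
    rw [card_compl, Fintype.card_fin]
    omega
  have := h.card_le_of_isolated (ι := survivors)
    (fun j => ⟨Sum.inr (Sum.inr j), by
      have hj := mem_compl.mp j.2
      rwa [mem_toRight, mem_toRight] at hj⟩)
    (fun i j hij => Subtype.ext (by simpa using hij))
    (fun j => not_adj_pendant_of_apex_mem hapex j _)
  rw [Fintype.card_coe] at this
  omega

theorem properColorable_of_cdColorable (hS' : S'.card ≤ k)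
    (h : CDColorable ((apexPendant G k q).induce {w | w ∉ S'}) (q + 1)) :
    ProperColorable (G.induce {w : V | w ∉ S'.toLeft}) q :=
  h.properColorable.of_hom_of_forall_adj
    ⟨fun a => ⟨.inl a, by simpa using a.2⟩, fun hab => hab⟩
    ⟨apex, apex_not_mem hS' h⟩ fun _ => trivial

end ApexPendant

theorem stmt13_general (G : SimpleGraph V) (k q : ℕ) (hq : q = 1 ∨ q = 2) :
    (∃ S : Finset V, S.card ≤ k ∧
        ProperColorable (G.induce {w : V | w ∉ S}) q) ↔
      (∃ S' : Finset (V ⊕ (Unit ⊕ Fin (k + q + 2))), S'.card ≤ k ∧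
        CDColorable ((apexPendant G k q).induce {w | w ∉ S'}) (q + 1)) := by
  constructor
  · rintro ⟨S, hS, h⟩
    exact ⟨S.map .inl, (card_map _).trans_le hS,
      ApexPendant.cdColorable_of_properColorable (by omega) h⟩
  · rintro ⟨S', hS', h⟩
    exact ⟨S'.toLeft, card_toLeft_le.trans hS',
      ApexPendant.properColorable_of_cdColorable hS' h⟩

/-- `G` has at most `k` vertices whose deletion leaves a properly `q`-colorable graph iff
`G'` has at most `k` vertices whose deletion leaves a `(q+1)`-cd-colorable graph. -/
theorem stmt13 [Fintype V] [DecidableEq V] (G : SimpleGraph V) (k q : ℕ)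
    (hk : 1 ≤ k) (hq : q = 1 ∨ q = 2) :
    (∃ S : Finset V, S.card ≤ k ∧
        ProperColorable (G.induce {w : V | w ∉ S}) q) ↔
      (∃ S' : Finset (V ⊕ (Unit ⊕ Fin (k + q + 2))), S'.card ≤ k ∧
        CDColorable ((apexPendant G k q).induce {w | w ∉ S'}) (q + 1)) :=
  stmt13_general G k q hq
end

section
/- Let G be a connected graph. Then G admits a cd-coloring with at most 3 colors using a 'Type 4' structure if the following holds: there exist vertices x, y, z inducing a triangle and a partition V(G) = {x,y,z} ⊎ X ⊎ Y ⊎ Z with X ⊆ N(x), Y ⊆ N(y), Z ⊆ N(z), and X ∪ {y}, Y ∪ {z}, Z ∪ {x} independent sets; in this case χ_cd(G) ≤ 3. -/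
variable {V : Type*}

/-- A connected graph with a `Type 4` structure is 3-cd-colorable. -/
theorem stmt16 [Fintype V] (G : SimpleGraph V) (hconn : G.Connected)
    (x y z : V) (hxy : G.Adj x y) (hyz : G.Adj y z) (hxz : G.Adj x z)
    (X Y Z : Set V)
    (hcover : ∀ v : V, v = x ∨ v = y ∨ v = z ∨ v ∈ X ∨ v ∈ Y ∨ v ∈ Z)
    (hx : x ∉ X ∪ Y ∪ Z) (hy : y ∉ X ∪ Y ∪ Z) (hz : z ∉ X ∪ Y ∪ Z)
    (hXY : Disjoint X Y) (hXZ : Disjoint X Z) (hYZ : Disjoint Y Z)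
    (hXN : X ⊆ G.neighborSet x) (hYN : Y ⊆ G.neighborSet y) (hZN : Z ⊆ G.neighborSet z)
    (hXind : ∀ a ∈ X ∪ {y}, ∀ b ∈ X ∪ {y}, ¬ G.Adj a b)
    (hYind : ∀ a ∈ Y ∪ {z}, ∀ b ∈ Y ∪ {z}, ¬ G.Adj a b)
    (hZind : ∀ a ∈ Z ∪ {x}, ∀ b ∈ Z ∪ {x}, ¬ G.Adj a b) :
    cdChromaticNumber G ≤ 3 := by
  classical
  apply Nat.sInf_le
  refine ⟨fun v => if v ∈ X ∨ v = y then 0 else if v ∈ Y ∨ v = z then 1 else 2, ?_, ?_⟩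
  · intro a b hab hc
    by_cases ha0 : a ∈ X ∨ a = y
    · by_cases hb0 : b ∈ X ∨ b = y
      · exact hXind a (by simpa using Or.symm ha0) b (by simpa using Or.symm hb0) hab
      · simp [ha0, hb0] at hc
        split at hc <;> simp at hc
    · by_cases hb0 : b ∈ X ∨ b = y
      · simp [ha0, hb0] at hc
        split at hc <;> simp at hc
      · by_cases ha1 : a ∈ Y ∨ a = z
        · by_cases hb1 : b ∈ Y ∨ b = z
          · exact hYind a (by simpa using Or.symm ha1) b (by simpa using Or.symm hb1) hab
          · simp [ha0, hb0, ha1, hb1] at hc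
        · by_cases hb1 : b ∈ Y ∨ b = z
          · simp [ha0, hb0, ha1, hb1] at hc
          · have haZ : a ∈ Z ∨ a = x := by
              rcases hcover a with h | h | h | h | h | h <;> tauto
            have hbZ : b ∈ Z ∨ b = x := by
              rcases hcover b with h | h | h | h | h | h <;> tauto
            exact hZind a (by simpa using Or.symm haZ) b (by simpa using Or.symm hbZ) hab
  · intro i _
    fin_cases i
    · refine ⟨x, fun v hv => ?_⟩
      by_cases h0 : v ∈ X ∨ v = y
      · rcases h0 with h | h
        · exact hXN h
        · exact h ▸ hxy
      · simp [h0] at hv; split at hv <;> simp at hv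
    · refine ⟨y, fun v hv => ?_⟩
      by_cases h0 : v ∈ X ∨ v = y
      · simp [h0] at hv
      · by_cases h1 : v ∈ Y ∨ v = z
        · rcases h1 with h | h
          · exact hYN h
          · exact h ▸ hyz
        · simp [h0, h1] at hv
    · refine ⟨z, fun v hv => ?_⟩
      by_cases h0 : v ∈ X ∨ v = y
      · simp [h0] at hv
      · by_cases h1 : v ∈ Y ∨ v = z
        · simp [h0, h1] at hv
        · have : v ∈ Z ∨ v = x := by
            rcases hcover v with h | h | h | h | h | h <;> tauto
          rcases this with h | h
          · exact hZN h
          · exact h ▸ hxz.symm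
end

section
/- Let G be a connected bipartite graph with a dominating edge (x, y), i.e., N(x) ∪ N(y) = V(G). Then χ_cd(G) ≤ 3. -/
variable {V : Type*}

/-- A connected bipartite graph with a dominating edge `(x, y)` (every vertex is adjacent
to `x` or to `y`) has cd-chromatic number at most 3. -/
theorem stmt17 [Fintype V] (G : SimpleGraph V) (hconn : G.Connected)
    (hbip : ∃ f : V → Bool, ∀ a b, G.Adj a b → f a ≠ f b)
    (x y : V) (hxy : G.Adj x y)
    (hdom : ∀ v : V, G.Adj x v ∨ G.Adj y v) :
    cdChromaticNumber G ≤ 3 := by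
  classical
  obtain ⟨f, hf⟩ := hbip
  have hfxy : f x ≠ f y := hf x y hxy
  set c : V → Fin 3 := fun v => if v = x then 2 else if f v = f y then 0 else 1 with hc
  have hcx : c x = 2 := by simp [hc]
  have hc0 : ∀ v, c v = 0 → v ≠ x ∧ f v = f y := by
    intro v hv
    by_cases h1 : v = x
    · simp [hc, h1] at hv
    · by_cases h2 : f v = f y
      · exact ⟨h1, h2⟩
      · simp [hc, h1, h2] at hv
  have hc1 : ∀ v, c v = 1 → v ≠ x ∧ f v ≠ f y := by
    intro v hv
    by_cases h1 : v = x
    · simp [hc, h1] at hv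
    · by_cases h2 : f v = f y
      · simp [hc, h1, h2] at hv
      · exact ⟨h1, h2⟩
  have hc2 : ∀ v, c v = 2 → v = x := by
    intro v hv
    by_cases h1 : v = x
    · exact h1
    · by_cases h2 : f v = f y <;> simp [hc, h1, h2] at hv
  apply Nat.sInf_le
  refine ⟨c, ?_, ?_⟩
  · intro a b hab hEq
    have hab' : f a ≠ f b := hf a b hab
    have hne : a ≠ b := hab.ne
    by_cases ha : a = x
    · subst ha
      have := hc2 b (by rw [← hEq, hcx])
      exact hne this.symm
    · by_cases hb : b = x
      · subst hb
        have := hc2 a (by rw [hEq, hcx])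
        exact hne this
      · by_cases h2 : f a = f y <;> by_cases h3 : f b = f y
        · exact hab' (h2.trans h3.symm)
        · simp [hc, ha, hb, h2, h3] at hEq
        · simp [hc, ha, hb, h2, h3] at hEq
        · exact hab' ((Bool.eq_not_iff.mpr h2).trans (Bool.eq_not_iff.mpr h3).symm)
  · intro i _
    fin_cases i
    · refine ⟨x, fun v hv => ?_⟩
      obtain ⟨hv1, hv2⟩ := hc0 v hv
      rcases hdom v with h | h
      · exact h
      · exact absurd hv2 (hf y v h).symm
    · refine ⟨y, fun v hv => ?_⟩
      obtain ⟨hv1, hv2⟩ := hc1 v hv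
      rcases hdom v with h | h
      · exact absurd (by
          rw [Bool.eq_not_iff.mpr (hf x v h).symm, Bool.eq_not_iff.mpr hfxy,
            Bool.not_not] : f v = f y) hv2
      · exact h
    · refine ⟨y, fun v hv => ?_⟩
      rw [hc2 v hv]
      exact hxy.symm
end

section
/- Let G be a graph with girth at least 4 and let {v₁, ..., v_k} be a total dominating set of G. Define V₁ = N(v₁) and, for i = 2, ..., k, Vᵢ = N(vᵢ) \ (V₁ ∪ ... ∪ V_{i−1}). Then V₁, ..., V_k is a partition of V(G) into (possibly empty) independent sets, each Vᵢ satisfying Vᵢ ⊆ N(vᵢ); hence G admits a cd-coloring with at most k colors. -/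
/-!
Since `G` has no triangles, every open neighbourhood `N(vᵢ)` is independent. The sets `Vᵢ`
are exactly `disjointed` applied to the neighbourhoods `N(vᵢ)`: they are pairwise disjoint,
`Vᵢ ⊆ N(vᵢ)`, and they cover `⋃ N(vᵢ) = V(G)` because the `vᵢ` totally dominate `G`.
Colouring each vertex by the index of its part is then a cd-colouring.
-/

variable {V : Type*}

lemma disjointed_set_apply {ι α : Type*} [Preorder ι] [LocallyFiniteOrderBot ι]
    (f : ι → Set α) (i : ι) : disjointed f i = f i \ ⋃ (j : ι) (_ : j < i), f j := by
  simp only [disjointed_apply, Finset.sup_set_eq_biUnion, Finset.mem_Iio]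

lemma existsUnique_mem_disjointed {ι α : Type*} [LinearOrder ι] [LocallyFiniteOrderBot ι]
    {f : ι → Set α} (hf : ∀ x, ∃ i, x ∈ f i) (x : α) : ∃! i, x ∈ disjointed f i := by
  obtain ⟨i, hi⟩ : ∃ i, x ∈ disjointed f i := by
    simpa only [← Set.mem_iUnion, iUnion_disjointed] using hf x
  exact ⟨i, hi, fun j hj => by_contra fun hji =>
    Set.disjoint_left.1 (disjoint_disjointed f hji) hj hi⟩

namespace SimpleGraph

variable {G : SimpleGraph V}

lemma cliqueFree_three_of_four_le_egirth (h : 4 ≤ G.egirth) : G.CliqueFree 3 := by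
  intro s hs
  obtain ⟨u, w, hw, hlen⟩ := is3Clique_iff_exists_cycle_length_three.1 ⟨s, hs⟩
  have := le_egirth.1 h u w hw
  rw [hlen] at this
  norm_num at this

lemma exists_isCDColoring_of_cover {k : ℕ} (d : Fin k → V) (P : Fin k → Set V)
    (hcover : ∀ w, ∃ i, w ∈ P i) (hindep : ∀ i, G.IsIndepSet (P i))
    (hdom : ∀ i, P i ⊆ G.neighborSet (d i)) : ∃ c : V → Fin k, IsCDColoring G c := by
  choose c hc using hcover
  refine ⟨c, fun a b hab hcab => ?_, fun i _ => ⟨d i, fun w hw => hdom i (hw ▸ hc w)⟩⟩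
  exact hindep (c b) (hcab ▸ hc a) (hc b) hab.ne hab

end SimpleGraph

theorem stmt18_general (G : SimpleGraph V) (hgirth : 4 ≤ G.egirth)
    (k : ℕ) (v : Fin k → V) (htds : ∀ w : V, ∃ i, G.Adj (v i) w)
    (Vs : Fin k → Set V)
    (hVs : ∀ i, Vs i =
      G.neighborSet (v i) \ ⋃ (j : Fin k) (_ : j < i), G.neighborSet (v j)) :
    (∀ w : V, ∃! i, w ∈ Vs i) ∧
      (∀ i, ∀ a ∈ Vs i, ∀ b ∈ Vs i, ¬ G.Adj a b) ∧
      (∀ i, Vs i ⊆ G.neighborSet (v i)) ∧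
      ∃ c : V → Fin k, IsCDColoring G c := by
  set N : Fin k → Set V := fun i => G.neighborSet (v i)
  obtain rfl : Vs = disjointed N := funext fun i => (hVs i).trans (disjointed_set_apply N i).symm
  have hdom (i : Fin k) : disjointed N i ⊆ N i := disjointed_subset N i
  have hindep (i : Fin k) : G.IsIndepSet (disjointed N i) :=
    (G.isIndepSet_neighborSet_of_triangleFree
      (SimpleGraph.cliqueFree_three_of_four_le_egirth hgirth) (v i)).mono (hdom i)
  have hpart := existsUnique_mem_disjointed htds
  refine ⟨hpart, fun i a ha b hb hab => hindep i ha hb hab.ne hab, hdom, ?_⟩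
  exact SimpleGraph.exists_isCDColoring_of_cover v _ (fun w => (hpart w).exists) hindep hdom

/-- Greedily peeling off neighbourhoods of a total dominating set of a graph of girth at
least 4 yields a partition into independent sets, each dominated by a vertex; hence a
cd-coloring with at most `k` colors. -/
theorem stmt18 [Fintype V] (G : SimpleGraph V) (hgirth : 4 ≤ G.egirth)
    (k : ℕ) (v : Fin k → V) (htds : ∀ w : V, ∃ i, G.Adj (v i) w)
    (Vs : Fin k → Set V)
    (hVs : ∀ i, Vs i =
      G.neighborSet (v i) \ ⋃ (j : Fin k) (_ : j < i), G.neighborSet (v j)) :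
    (∀ w : V, ∃! i, w ∈ Vs i) ∧
      (∀ i, ∀ a ∈ Vs i, ∀ b ∈ Vs i, ¬ G.Adj a b) ∧
      (∀ i, Vs i ⊆ G.neighborSet (v i)) ∧
      ∃ c : V → Fin k, IsCDColoring G c :=
  stmt18_general G hgirth k v htds Vs hVs
end
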